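/- arXiv:2504.17583 — 2 statements merged into one kernel-verified Lean document; each statement's English description precedes it below -/
import Mathlib

section
/- Let n ≥ 4 be a natural number and let p, q ∈ [0,1] be real numbers satisfying p·(1−q) < 1/n and q·(1−p) < 1/n. Then either both p ≤ 2/n and q ≤ 2/n, or both p ≥ 1 − 2/n and q ≥ 1 − 2/n. -/
/-- Dichotomy for near-deterministic output probabilities:
if `p·(1−q) < 1/n` and `q·(1−p) < 1/n` with `n ≥ 4`, then either both
probabilities are at most `2/n` or both are at least `1 − 2/n`. -/
theorem stmt_0 (n : ℕ) (hn : 4 ≤ n) (p q : ℝ)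
    (hp : p ∈ Set.Icc (0 : ℝ) 1) (hq : q ∈ Set.Icc (0 : ℝ) 1)
    (h1 : p * (1 - q) < 1 / n) (h2 : q * (1 - p) < 1 / n) :
    (p ≤ 2 / n ∧ q ≤ 2 / n) ∨ (1 - 2 / n ≤ p ∧ 1 - 2 / n ≤ q) := by
  obtain ⟨hp0, hp1⟩ := hp
  obtain ⟨hq0, hq1⟩ := hq
  have hn4 : (4 : ℝ) ≤ n := by exact_mod_cast hn
  have hnpos : (0 : ℝ) < n := by linarith
  have h1' : p * (1 - q) * n < 1 := (lt_div_iff₀ hnpos).mp h1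
  have h2' : q * (1 - p) * n < 1 := (lt_div_iff₀ hnpos).mp h2
  rcases le_or_gt p (1/2) with hple | hpge
  · left
    have hq2 : q ≤ 2 / n := by
      rw [le_div_iff₀ hnpos]; nlinarith
    constructor
    · have hq12 : q ≤ 1/2 := by
        have h2n : (2:ℝ)/n ≤ 1/2 := by
          rw [div_le_div_iff₀ hnpos (by norm_num)]; linarith
        linarith
      rw [le_div_iff₀ hnpos]; nlinarith
    · exact hq2
  · right
    have hq2 : 1 - 2 / n ≤ q := by
      have : (1 - q) * n < 2 := by nlinarith
      rw [sub_le_iff_le_add, ← sub_le_iff_le_add', le_div_iff₀ hnpos]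
      nlinarith
    constructor
    · have hq12 : (1:ℝ)/2 ≤ q := by
        have h2n : (2:ℝ)/n ≤ 1/2 := by
          rw [div_le_div_iff₀ hnpos (by norm_num)]; linarith
        linarith
      have : (1 - p) * n < 2 := by nlinarith
      rw [sub_le_iff_le_add, ← sub_le_iff_le_add', le_div_iff₀ hnpos]
      nlinarith
    · exact hq2
end

section
/- Let λ ≥ 1 be a natural number, let D : {0,1}^λ → X be any function, and let S ⊆ X be a set of 'solvable instances' such that for every r ∈ {0,1}^λ, the probability over a uniformly random s ∈ {0,1}^λ that D(r ⊕ s) ∈ S is at least 1/p, where p ≥ 1 is a real with 2^λ · (1 − 1/p)^{λ·⌈p⌉} < 1. Then there exist strings s_1, …, s_k ∈ {0,1}^λ with k = λ·⌈p⌉ such that for every r ∈ {0,1}^λ there is some i ∈ [k] with D(r ⊕ s_i) ∈ S. -/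
open Classical

/-- Probabilistic-method existence of good shifts (totality transformation):
if for every `r` the fraction of shifts `s` with `D(r ⊕ s)` solvable is at least `1/p`,
and `2^λ·(1 − 1/p)^{λ·⌈p⌉} < 1`, then there are `k = λ·⌈p⌉` shifts `s_1, …, s_k`
such that every `r` has some `i` with `D(r ⊕ s_i)` solvable. -/
theorem stmt_5 (lam : ℕ) (hlam : 1 ≤ lam) {X : Type*}
    (D : (Fin lam → Bool) → X) (S : Set X) (p : ℝ) (hp : 1 ≤ p)
    (hfrac : ∀ r : Fin lam → Bool,
      (1 : ℝ) / p ≤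
        ({s : Fin lam → Bool | D (fun i => xor (r i) (s i)) ∈ S}.ncard : ℝ) / 2 ^ lam)
    (hsmall : (2 : ℝ) ^ lam * (1 - 1 / p) ^ (lam * ⌈p⌉₊) < 1) :
    ∃ s : Fin (lam * ⌈p⌉₊) → (Fin lam → Bool),
      ∀ r : Fin lam → Bool, ∃ i, D (fun j => xor (r j) (s i j)) ∈ S := by
  classical
  by_contra hcon
  push_neg at hcon
  set k := lam * ⌈p⌉₊ with hkdef
  have hp0 : (0:ℝ) < p := lt_of_lt_of_le one_pos hp
  have h1p : (0:ℝ) ≤ 1 - 1/p := by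
    have : 1/p ≤ 1 := by rw [div_le_one hp0]; exact hp
    linarith
  have hN : (Finset.univ : Finset (Fin lam → Bool)).card = 2 ^ lam := by
    simp [Finset.card_univ]
  -- bad sets
  set B : (Fin lam → Bool) → Finset (Fin lam → Bool) :=
    fun r => Finset.univ.filter (fun s => D (fun i => xor (r i) (s i)) ∉ S) with hBdef
  have hB : ∀ r, ((B r).card : ℝ) ≤ 2 ^ lam * (1 - 1/p) := by
    intro r
    have hGfin : {s : Fin lam → Bool | D (fun i => xor (r i) (s i)) ∈ S}.Finite :=
      Set.toFinite {s : Fin lam → Bool | D (fun i => xor (r i) (s i)) ∈ S}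
    have hGcard : {s : Fin lam → Bool | D (fun i => xor (r i) (s i)) ∈ S}.ncard
        = ((Finset.univ : Finset (Fin lam → Bool)).filter (fun s => D (fun i => xor (r i) (s i)) ∈ S)).card := by
      rw [Set.ncard_eq_toFinset_card _ hGfin]
      congr 1
      ext s
      simp
    have hsum : ((Finset.univ : Finset (Fin lam → Bool)).filter (fun s => D (fun i => xor (r i) (s i)) ∈ S)).card
        + (B r).card = 2 ^ lam := by
      rw [hBdef, Finset.card_filter_add_card_filter_not, hN]
    have hG := hfrac r
    rw [hGcard] at hG
    have h2 : (0:ℝ) < 2 ^ lam := by positivity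
    rw [div_le_div_iff₀ hp0 h2] at hG
    have hsum' : (((Finset.univ : Finset (Fin lam → Bool)).filter (fun s => D (fun i => xor (r i) (s i)) ∈ S)).card : ℝ)
        + ((B r).card : ℝ) = 2 ^ lam := by
      exact_mod_cast congrArg (fun n : ℕ => (n : ℝ)) hsum
    have h1 : (1:ℝ) - 1/p = (p-1)/p := by field_simp
    rw [h1, ← mul_div_assoc, le_div_iff₀ hp0]
    nlinarith [hG, hsum']
  -- every tuple is bad for some r
  have hsubset : (Finset.univ : Finset (Fin k → (Fin lam → Bool))) ⊆
      Finset.univ.biUnion (fun r => Fintype.piFinset (fun _ : Fin k => B r)) := by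
    intro s _
    obtain ⟨r, hr⟩ := hcon s
    refine Finset.mem_biUnion.2 ⟨r, Finset.mem_univ _, ?_⟩
    rw [Fintype.mem_piFinset]
    intro i
    simp only [hBdef, Finset.mem_filter, Finset.mem_univ, true_and]
    exact hr i
  have hcount : ((2:ℕ) ^ lam) ^ k ≤ ∑ r : Fin lam → Bool, (B r).card ^ k := by
    calc ((2:ℕ) ^ lam) ^ k
        = (Finset.univ : Finset (Fin k → (Fin lam → Bool))).card := by
          simp [Finset.card_univ]
      _ ≤ (Finset.univ.biUnion (fun r => Fintype.piFinset (fun _ : Fin k => B r))).card :=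
          Finset.card_le_card hsubset
      _ ≤ ∑ r : Fin lam → Bool, (Fintype.piFinset (fun _ : Fin k => B r)).card :=
          Finset.card_biUnion_le
      _ = ∑ r : Fin lam → Bool, (B r).card ^ k := by
          simp [Fintype.card_piFinset]
  have hcountR : ((2:ℝ) ^ lam) ^ k ≤ ∑ r : Fin lam → Bool, ((B r).card : ℝ) ^ k := by
    exact_mod_cast hcount
  have hsumle : ∑ r : Fin lam → Bool, ((B r).card : ℝ) ^ k
      ≤ 2 ^ lam * (2 ^ lam * (1 - 1/p)) ^ k := by
    calc ∑ r : Fin lam → Bool, ((B r).card : ℝ) ^ k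
        ≤ ∑ _r : Fin lam → Bool, (2 ^ lam * (1 - 1/p)) ^ k := by
          apply Finset.sum_le_sum
          intro r _
          exact pow_le_pow_left₀ (by positivity) (hB r) k
      _ = 2 ^ lam * (2 ^ lam * (1 - 1/p)) ^ k := by
          rw [Finset.sum_const, Finset.card_univ]
          simp [nsmul_eq_mul]
  have hpos : (0:ℝ) < ((2:ℝ) ^ lam) ^ k := by positivity
  have : ((2:ℝ) ^ lam) ^ k ≤ 2 ^ lam * (2 ^ lam * (1 - 1/p)) ^ k := le_trans hcountR hsumle
  rw [mul_pow] at this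
  nlinarith [hsmall, hpos, this]
end
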